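/- arXiv:1703.05793 — 4 statements merged into one kernel-verified Lean document; each statement's English description precedes it below -/
import Mathlib

section
/- For every natural number m, the cardinality of V_m equals 2·(4^m + 1); equivalently, the cardinality of V_m \ V_0 is 2·(4^m − 1). -/
/-! The vertices of a regular tetrahedron are affinely independent, so barycentric coordinates
are unique. A point of the cell `f i '' V m` has `i`-th barycentric coordinate at least `1/2`;
hence two distinct cells `f i '' V m` and `f j '' V m` meet exactly in the midpoint of `P i` and
`P j`. These six midpoints are distinct, so no point lies in three cells, and inclusion–exclusion
gives `|V (m+1)| + 6 = 4 |V m|`, whose solution with `|V 0| = 4` is `2 (4 ^ m + 1)`. -/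

/-- The vertex sets of the graph approximations of the Sierpiński tetrahedron:
`V 0 = {P 0, P 1, P 2, P 3}` and `V (m+1) = ⋃ i, f i '' (V m)`, where
`f i x = (x + P i)/2`. -/
def sierpinskiVertices (P : Fin 4 → EuclideanSpace ℝ (Fin 3)) :
    ℕ → Set (EuclideanSpace ℝ (Fin 3))
  | 0 => Set.range P
  | m + 1 => ⋃ i, (fun x => (1 / 2 : ℝ) • (x + P i)) '' sierpinskiVertices P m

open RealInnerProductSpace in
theorem norm_sum_smul_sq_of_dist_eq_of_sum_eq_zero {ι E : Type*} [NormedAddCommGroup E]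
    [InnerProductSpace ℝ E] {P : ι → E} {r : ℝ}
    (hP : ∀ i j, i ≠ j → dist (P i) (P j) = r) {s : Finset ι} {d : ι → ℝ}
    (hd : ∑ i ∈ s, d i = 0) :
    ‖∑ i ∈ s, d i • P i‖ ^ 2 = r ^ 2 / 2 * ∑ i ∈ s, d i ^ 2 := by
  classical
  have hsq : ∀ i j, ‖P i - P j‖ * ‖P i - P j‖ = r ^ 2 * (1 - if i = j then 1 else 0) := by
    intro i j
    by_cases h : i = j
    · simp [h]
    · rw [← dist_eq_norm, hP i j h, if_neg h]; ring
  rw [← real_inner_self_eq_norm_sq, inner_sum_smul_sum_smul_of_sum_eq_zero P hd P hd]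
  simp only [hsq, mul_sub, mul_one, mul_ite, mul_zero, Finset.sum_sub_distrib,
    Finset.sum_ite_eq, ← Finset.sum_mul, ← Finset.mul_sum, hd]
  rw [Finset.sum_ite_of_true (fun _ h => h), Finset.sum_const_zero, ← Finset.sum_mul]
  simp only [sq]
  ring

theorem affineIndependent_of_dist_eq {ι E : Type*} [NormedAddCommGroup E]
    [InnerProductSpace ℝ E] {P : ι → E} {r : ℝ} (hr : r ≠ 0)
    (hP : ∀ i j, i ≠ j → dist (P i) (P j) = r) : AffineIndependent ℝ P := by
  refine affineIndependent_iff.2 fun s d hd hdP => ?_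
  have hnorm := norm_sum_smul_sq_of_dist_eq_of_sum_eq_zero hP hd
  rw [hdP, norm_zero, zero_pow two_ne_zero, zero_eq_mul] at hnorm
  have hsq : ∑ i ∈ s, d i ^ 2 = 0 := hnorm.resolve_left (by positivity)
  intro i hi
  exact pow_eq_zero_iff two_ne_zero |>.1 <|
    (Finset.sum_eq_zero_iff_of_nonneg fun i _ => sq_nonneg (d i)).1 hsq i hi

theorem eq_single_of_one_le_of_mem_stdSimplex {ι : Type*} [Fintype ι] [DecidableEq ι]
    {w : ι → ℝ} (hw : w ∈ stdSimplex ℝ ι) {j : ι} (hj : 1 ≤ w j) : w = Pi.single j 1 := by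
  have hsplit := Finset.add_sum_erase Finset.univ w (Finset.mem_univ j)
  have hrest : ∑ k ∈ Finset.univ.erase j, w k = 0 :=
    le_antisymm (by linarith [hw.2]) (Finset.sum_nonneg fun k _ => hw.1 k)
  funext k
  by_cases hk : k = j
  · subst hk
    rw [Pi.single_eq_same]
    linarith [hw.2]
  · rw [Pi.single_eq_of_ne hk]
    exact (Finset.sum_eq_zero_iff_of_nonneg fun k _ => hw.1 k).1 hrest k
      (Finset.mem_erase.2 ⟨hk, Finset.mem_univ k⟩)

theorem AffineIndependent.eq_single_of_add_eq_add {ι E : Type*} [Fintype ι] [DecidableEq ι]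
    [AddCommGroup E] [Module ℝ E] {P : ι → E} (hP : AffineIndependent ℝ P) {u v : ι → ℝ}
    (hu : u ∈ stdSimplex ℝ ι) (hv : v ∈ stdSimplex ℝ ι) {i j : ι} (hij : i ≠ j)
    (h : Fintype.linearCombination ℝ P u + P i = Fintype.linearCombination ℝ P v + P j) :
    u = Pi.single j 1 := by
  -- the `j`-th barycentric coordinates of `u + e i = v + e j` give `u j = v j + 1`
  have hcoord := hP.eq_of_sum_eq_sum (s := Finset.univ)
    (w₁ := u + Pi.single i 1) (w₂ := v + Pi.single j 1)
    (by simp [Finset.sum_add_distrib, hu.2, hv.2])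
    (by simpa [add_smul, Finset.sum_add_distrib, Fintype.linearCombination_apply] using h)
    j (Finset.mem_univ j)
  simp only [Pi.add_apply, Pi.single_eq_same, Pi.single_eq_of_ne hij.symm] at hcoord
  exact eq_single_of_one_le_of_mem_stdSimplex hu (by linarith [hv.1 j])

theorem Set.ncard_biUnion_add_choose_two {ι α : Type*} [DecidableEq ι] {A : ι → Set α}
    (hA : ∀ i, (A i).Finite) {c : ι → ι → α} (hc : ∀ i j, i ≠ j → A i ∩ A j = {c i j})
    (hc_inj : ∀ k, Set.InjOn (c · k) {k}ᶜ) (s : Finset ι) :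
    (⋃ i ∈ s, A i).ncard + s.card.choose 2 = ∑ i ∈ s, (A i).ncard := by
  induction s using Finset.induction_on with
  | empty => simp
  | insert k s hk ih =>
    have hinter : A k ∩ ⋃ i ∈ s, A i = (c · k) '' s := by
      rw [Set.inter_iUnion₂, Set.image_eq_iUnion]
      refine Set.iUnion₂_congr fun i hi => ?_
      rw [Set.inter_comm, hc i k (ne_of_mem_of_not_mem hi hk)]
    have hinter_card : (A k ∩ ⋃ i ∈ s, A i).ncard = s.card := by
      rw [hinter, ((hc_inj k).mono fun i hi => ne_of_mem_of_not_mem hi hk).ncard_image,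
        Set.ncard_coe_finset]
    have hunion := Set.ncard_union_add_ncard_inter (A k) (⋃ i ∈ s, A i) (hA k)
      (s.finite_toSet.biUnion fun i _ => hA i)
    have hchoose : (s.card + 1).choose 2 = s.card.choose 2 + s.card := by
      rw [Nat.choose_succ_succ', Nat.choose_one_right, add_comm]
    rw [Finset.set_biUnion_insert, Finset.sum_insert hk, Finset.card_insert_of_notMem hk,
      hchoose]
    omega

noncomputable def sierpinskiMap (P : Fin 4 → EuclideanSpace ℝ (Fin 3)) (i : Fin 4)
    (x : EuclideanSpace ℝ (Fin 3)) : EuclideanSpace ℝ (Fin 3) :=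
  (1 / 2 : ℝ) • (x + P i)

section Sierpinski

variable {P : Fin 4 → EuclideanSpace ℝ (Fin 3)}

theorem sierpinskiVertices_succ (P : Fin 4 → EuclideanSpace ℝ (Fin 3)) (m : ℕ) :
    sierpinskiVertices P (m + 1) = ⋃ i, sierpinskiMap P i '' sierpinskiVertices P m :=
  rfl

theorem sierpinskiMap_injective (P : Fin 4 → EuclideanSpace ℝ (Fin 3)) (i : Fin 4) :
    Function.Injective (sierpinskiMap P i) := fun _ _ h =>
  add_right_cancel (smul_right_injective _ (one_div_ne_zero two_ne_zero) h)

theorem sierpinskiMap_self (P : Fin 4 → EuclideanSpace ℝ (Fin 3)) (i : Fin 4) :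
    sierpinskiMap P i (P i) = P i := by
  rw [sierpinskiMap, ← two_smul ℝ (P i), smul_smul]
  norm_num

theorem sierpinskiVertices_zero_subset (P : Fin 4 → EuclideanSpace ℝ (Fin 3)) (m : ℕ) :
    sierpinskiVertices P 0 ⊆ sierpinskiVertices P m := by
  induction m with
  | zero => exact subset_rfl
  | succ m ih =>
    rintro _ ⟨i, rfl⟩
    exact Set.mem_iUnion.2 ⟨i, P i, ih ⟨i, rfl⟩, sierpinskiMap_self P i⟩

theorem sierpinskiVertices_finite (P : Fin 4 → EuclideanSpace ℝ (Fin 3)) (m : ℕ) :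
    (sierpinskiVertices P m).Finite := by
  induction m with
  | zero => exact Set.finite_range P
  | succ m ih => exact Set.finite_iUnion fun i => ih.image _

theorem sierpinskiVertices_subset_image_stdSimplex (P : Fin 4 → EuclideanSpace ℝ (Fin 3))
    (m : ℕ) :
    sierpinskiVertices P m ⊆ Fintype.linearCombination ℝ P '' stdSimplex ℝ (Fin 4) := by
  induction m with
  | zero =>
    rintro _ ⟨i, rfl⟩
    exact ⟨Pi.single i 1, single_mem_stdSimplex ℝ i, by simp⟩
  | succ m ih =>
    rw [sierpinskiVertices_succ, Set.iUnion_subset_iff]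
    rintro i _ ⟨_, hx, rfl⟩
    obtain ⟨w, hw, rfl⟩ := ih hx
    refine ⟨(1 / 2 : ℝ) • w + (1 / 2 : ℝ) • Pi.single i 1,
      convex_stdSimplex ℝ _ hw (single_mem_stdSimplex ℝ i) (by norm_num) (by norm_num)
        (by norm_num), ?_⟩
    simp [sierpinskiMap, smul_add]

theorem sierpinskiMap_image_inter (hP : AffineIndependent ℝ P) (m : ℕ) {i j : Fin 4}
    (hij : i ≠ j) :
    sierpinskiMap P i '' sierpinskiVertices P m ∩ sierpinskiMap P j '' sierpinskiVertices P m =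
      {(1 / 2 : ℝ) • (P i + P j)} := by
  refine Set.Subset.antisymm ?_ ?_
  · rintro _ ⟨⟨y, hy, rfl⟩, ⟨z, hz, hzy⟩⟩
    obtain ⟨u, hu, rfl⟩ := sierpinskiVertices_subset_image_stdSimplex P m hy
    obtain ⟨v, hv, rfl⟩ := sierpinskiVertices_subset_image_stdSimplex P m hz
    have hadd := smul_right_injective _ (one_div_ne_zero two_ne_zero) hzy.symm
    rw [hP.eq_single_of_add_eq_add hu hv hij hadd, Fintype.linearCombination_apply_single,
      one_smul, sierpinskiMap, add_comm]
    rfl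
  · rintro _ rfl
    have hPi := sierpinskiVertices_zero_subset P m ⟨i, rfl⟩
    have hPj := sierpinskiVertices_zero_subset P m ⟨j, rfl⟩
    exact ⟨⟨P j, hPj, by rw [sierpinskiMap, add_comm]⟩, ⟨P i, hPi, rfl⟩⟩

theorem ncard_sierpinskiVertices_succ_add_six (hP : AffineIndependent ℝ P) (m : ℕ) :
    (sierpinskiVertices P (m + 1)).ncard + 6 = 4 * (sierpinskiVertices P m).ncard := by
  have hcount := Set.ncard_biUnion_add_choose_two
    (A := fun i => sierpinskiMap P i '' sierpinskiVertices P m)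
    (fun i => (sierpinskiVertices_finite P m).image _)
    (fun i j hij => sierpinskiMap_image_inter hP m hij)
    (fun k i _ j _ hij => hP.injective (add_right_cancel
      (smul_right_injective _ (one_div_ne_zero two_ne_zero) hij)))
    Finset.univ
  have hchoose : (4 : ℕ).choose 2 = 6 := rfl
  simpa [sierpinskiVertices_succ, Set.ncard_image_of_injective _ (sierpinskiMap_injective P _),
    hchoose] using hcount

theorem ncard_sierpinskiVertices (hP : AffineIndependent ℝ P) (m : ℕ) :
    (sierpinskiVertices P m).ncard = 2 * (4 ^ m + 1) := by
  induction m with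
  | zero => simp [sierpinskiVertices, Set.ncard_range_of_injective hP.injective]
  | succ m ih =>
    have := ncard_sierpinskiVertices_succ_add_six hP m
    rw [pow_succ]
    omega

end Sierpinski

/-- For every `m`, the cardinality of `V m` equals `2 * (4 ^ m + 1)`;
equivalently, the cardinality of `V m \ V 0` is `2 * (4 ^ m - 1)`. -/
theorem sierpinski_tetrahedron_vertex_count
    (P : Fin 4 → EuclideanSpace ℝ (Fin 3))
    (hreg : ∀ i j, i ≠ j → dist (P i) (P j) = 1) :
    ∀ m : ℕ,
      (sierpinskiVertices P m).ncard = 2 * (4 ^ m + 1) ∧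
      (sierpinskiVertices P m \ sierpinskiVertices P 0).ncard = 2 * (4 ^ m - 1) := by
  have hP : AffineIndependent ℝ P := affineIndependent_of_dist_eq one_ne_zero hreg
  intro m
  refine ⟨ncard_sierpinskiVertices hP m, ?_⟩
  rw [Set.ncard_sdiff (sierpinskiVertices_zero_subset P m)
      (sierpinskiVertices_finite P 0), ncard_sierpinskiVertices hP,
    ncard_sierpinskiVertices hP, pow_zero]
  have := Nat.one_le_pow m 4 (by norm_num)
  omega
end

section
/- The minimum value of the level-1 graph energy E_1(ũ) over all extensions of the boundary values (a,b,c,d) equals (2/3)·E_0(u), where E_0(u) = (a−b)² + (a−c)² + (a−d)² + (b−c)² + (b−d)² + (c−d)². Hence the energy renormalization constant of the Sierpiński tetrahedron is r = 2/3. -/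
/-- The level-0 energy on the four boundary vertices of the tetrahedron. -/
def E0 (a b c d : ℝ) : ℝ :=
  (a - b) ^ 2 + (a - c) ^ 2 + (a - d) ^ 2 + (b - c) ^ 2 + (b - d) ^ 2 + (c - d) ^ 2

/-- The level-1 graph energy of the Sierpiński tetrahedron: the sum of squared
differences over the 24 edges of the level-1 graph, with boundary values
`a, b, c, d` and midpoint values `x₁, …, x₆`. -/
def E1 (a b c d x₁ x₂ x₃ x₄ x₅ x₆ : ℝ) : ℝ :=
  (x₁ - a) ^ 2 + (x₁ - b) ^ 2 + (x₁ - x₂) ^ 2 + (x₁ - x₃) ^ 2 + (x₁ - x₄) ^ 2 + (x₁ - x₅) ^ 2 +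
  (x₂ - b) ^ 2 + (x₂ - c) ^ 2 + (x₂ - x₃) ^ 2 + (x₂ - x₅) ^ 2 + (x₂ - x₆) ^ 2 +
  (x₃ - a) ^ 2 + (x₃ - c) ^ 2 + (x₃ - x₄) ^ 2 + (x₃ - x₆) ^ 2 +
  (x₄ - a) ^ 2 + (x₄ - d) ^ 2 + (x₄ - x₅) ^ 2 + (x₄ - x₆) ^ 2 +
  (x₅ - b) ^ 2 + (x₅ - d) ^ 2 + (x₅ - x₆) ^ 2 +
  (x₆ - c) ^ 2 + (x₆ - d) ^ 2

/-!
The minimiser is the harmonic extension `h`: each midpoint value is the average of its six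
neighbours, which gives `h = (2 (u_p + u_q) + u_r + u_s) / 6` at the midpoint of the edge `pq`.
Since `h` is harmonic, the cross term in `E1 (h + y)` vanishes, so `E1 (h + y)` is `E1 h` plus
the energy of `y` with zero boundary values, which is nonnegative. A direct computation gives
`E1 h = (2/3) E0`.
-/

/-- The value at the midpoint of the edge `pq`; `r, s` are the other two vertices. -/
noncomputable def harmonicMidpoint (p q r s : ℝ) : ℝ := (2 * (p + q) + r + s) / 6

section

variable (a b c d : ℝ)

noncomputable abbrev harmonicEnergy : ℝ :=
  E1 a b c d (harmonicMidpoint a b c d) (harmonicMidpoint b c a d) (harmonicMidpoint a c b d)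
    (harmonicMidpoint a d b c) (harmonicMidpoint b d a c) (harmonicMidpoint c d a b)

theorem E1_nonneg (x₁ x₂ x₃ x₄ x₅ x₆ : ℝ) : 0 ≤ E1 a b c d x₁ x₂ x₃ x₄ x₅ x₆ := by
  unfold E1
  positivity

theorem harmonicEnergy_eq : harmonicEnergy a b c d = 2 / 3 * E0 a b c d := by
  unfold harmonicEnergy E1 E0 harmonicMidpoint
  ring

theorem E1_eq_harmonicEnergy_add (x₁ x₂ x₃ x₄ x₅ x₆ : ℝ) :
    E1 a b c d x₁ x₂ x₃ x₄ x₅ x₆ = harmonicEnergy a b c d +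
      E1 0 0 0 0 (x₁ - harmonicMidpoint a b c d) (x₂ - harmonicMidpoint b c a d)
        (x₃ - harmonicMidpoint a c b d) (x₄ - harmonicMidpoint a d b c)
        (x₅ - harmonicMidpoint b d a c) (x₆ - harmonicMidpoint c d a b) := by
  unfold harmonicEnergy E1 harmonicMidpoint
  ring

end

/-- The minimum of the level-1 energy over all extensions of the boundary
values `(a, b, c, d)` equals `(2/3) · E0`: the energy renormalization constant
of the Sierpiński tetrahedron is `r = 2/3`. -/
theorem sierpinski_tetrahedron_energy_renormalization (a b c d : ℝ) :
    IsLeast {e : ℝ | ∃ x₁ x₂ x₃ x₄ x₅ x₆ : ℝ, e = E1 a b c d x₁ x₂ x₃ x₄ x₅ x₆}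
      ((2 / 3) * E0 a b c d) := by
  refine ⟨⟨_, _, _, _, _, _, (harmonicEnergy_eq a b c d).symm⟩, ?_⟩
  rintro e ⟨x₁, x₂, x₃, x₄, x₅, x₆, rfl⟩
  rw [E1_eq_harmonicEnergy_add, harmonicEnergy_eq]
  exact le_add_of_nonneg_right (E1_nonneg ..)
end

section
/- For λ ∉ {2,6,8}, the eigenvalue equation on the interior points of a subdivided tetrahedral cell has the unique solution u(Y_1) = [(4−λ)(u(X_0)+u(X_1)) + 2(u(X_2)+u(X_3))] / [(2−λ)(6−λ)] (and symmetrically for Y_2,...,Y_6). -/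
/-!
The six midpoints split into three pairs of opposite edges, `(Y₁, Y₆)`, `(Y₂, Y₄)`, `(Y₃, Y₅)`,
and each `Y_k` is adjacent to every midpoint except its opposite one. Summing all six equations
gives `(2 - λ) S = 3 U` for `S = ∑ u(Y_k)` and `U = ∑ u(X_i)`; summing the two equations of an
opposite pair and using this gives `(2 - λ)(y + y') = U` (this is where `λ ≠ 8` enters), while
subtracting them gives `(6 - λ)(y - y') = a - a'` for the boundary sums `a, a'` of the two edges.
-/

namespace SierpinskiTetrahedron

theorem opposite_pair_sum {l a a' s y y' : ℝ} (h8 : l ≠ 8) (hs : (2 - l) * s = 3 * (a + a'))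
    (hy : (6 - l) * y = a + (s - y - y')) (hy' : (6 - l) * y' = a' + (s - y - y')) :
    (2 - l) * (y + y') = a + a' := by
  have key : (8 - l) * ((2 - l) * (y + y') - (a + a')) = 0 := by
    linear_combination (2 - l) * hy + (2 - l) * hy' + 2 * hs
  have h8' : (8 : ℝ) - l ≠ 0 := sub_ne_zero.mpr (Ne.symm h8)
  exact sub_eq_zero.mp ((mul_eq_zero.mp key).resolve_left h8')

theorem opposite_pair_solution {l : ℝ} (a a' s y y' : ℝ) (h2 : l ≠ 2) (h6 : l ≠ 6) (h8 : l ≠ 8)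
    (hs : (2 - l) * s = 3 * (a + a'))
    (hy : (6 - l) * y = a + (s - y - y')) (hy' : (6 - l) * y' = a' + (s - y - y')) :
    y = ((4 - l) * a + 2 * a') / ((2 - l) * (6 - l)) ∧
    y' = ((4 - l) * a' + 2 * a) / ((2 - l) * (6 - l)) := by
  have hsum := opposite_pair_sum h8 hs hy hy'
  have hden : (2 - l) * (6 - l) ≠ 0 :=
    mul_ne_zero (sub_ne_zero.mpr (Ne.symm h2)) (sub_ne_zero.mpr (Ne.symm h6))
  constructor
  · rw [eq_div_iff hden]
    linear_combination ((6 - l) / 2) * hsum + ((2 - l) / 2) * (hy - hy')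
  · rw [eq_div_iff hden]
    linear_combination ((6 - l) / 2) * hsum - ((2 - l) / 2) * (hy - hy')

end SierpinskiTetrahedron

open SierpinskiTetrahedron in
/-- For `λ ∉ {2,6,8}`, the eigenvalue equations at the six interior (midpoint)
points `Y₁, …, Y₆` of a subdivided tetrahedral cell with boundary values
`u(X₀) = u₀, …, u(X₃) = u₃` have the unique solution
`u(Y₁) = [(4−λ)(u₀+u₁) + 2(u₂+u₃)] / [(2−λ)(6−λ)]`, and symmetrically. -/
theorem sierpinski_tetrahedron_cell_eigen_solution
    (l u₀ u₁ u₂ u₃ y₁ y₂ y₃ y₄ y₅ y₆ : ℝ)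
    (hl : l ∉ ({2, 6, 8} : Set ℝ))
    (h₁ : (6 - l) * y₁ = u₀ + u₁ + y₂ + y₃ + y₄ + y₅)
    (h₂ : (6 - l) * y₂ = u₁ + u₂ + y₁ + y₃ + y₅ + y₆)
    (h₃ : (6 - l) * y₃ = u₀ + u₂ + y₁ + y₂ + y₄ + y₆)
    (h₄ : (6 - l) * y₄ = u₀ + u₃ + y₁ + y₃ + y₅ + y₆)
    (h₅ : (6 - l) * y₅ = u₁ + u₃ + y₁ + y₂ + y₄ + y₆)
    (h₆ : (6 - l) * y₆ = u₂ + u₃ + y₂ + y₃ + y₄ + y₅) :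
    y₁ = ((4 - l) * (u₀ + u₁) + 2 * (u₂ + u₃)) / ((2 - l) * (6 - l)) ∧
    y₂ = ((4 - l) * (u₁ + u₂) + 2 * (u₀ + u₃)) / ((2 - l) * (6 - l)) ∧
    y₃ = ((4 - l) * (u₀ + u₂) + 2 * (u₁ + u₃)) / ((2 - l) * (6 - l)) ∧
    y₄ = ((4 - l) * (u₀ + u₃) + 2 * (u₁ + u₂)) / ((2 - l) * (6 - l)) ∧
    y₅ = ((4 - l) * (u₁ + u₃) + 2 * (u₀ + u₂)) / ((2 - l) * (6 - l)) ∧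
    y₆ = ((4 - l) * (u₂ + u₃) + 2 * (u₀ + u₁)) / ((2 - l) * (6 - l)) := by
  simp only [Set.mem_insert_iff, Set.mem_singleton_iff, not_or] at hl
  obtain ⟨h2, h6, h8⟩ := hl
  set s := y₁ + y₂ + y₃ + y₄ + y₅ + y₆
  have hs : (2 - l) * s = 3 * (u₀ + u₁ + u₂ + u₃) := by linarith
  obtain ⟨hy₁, hy₆⟩ := opposite_pair_solution (u₀ + u₁) (u₂ + u₃) s y₁ y₆
    h2 h6 h8 (by linarith) (by linarith) (by linarith)
  obtain ⟨hy₂, hy₄⟩ := opposite_pair_solution (u₁ + u₂) (u₀ + u₃) s y₂ y₄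
    h2 h6 h8 (by linarith) (by linarith) (by linarith)
  obtain ⟨hy₃, hy₅⟩ := opposite_pair_solution (u₀ + u₂) (u₁ + u₃) s y₃ y₅
    h2 h6 h8 (by linarith) (by linarith) (by linarith)
  exact ⟨hy₁, hy₂, hy₃, hy₄, hy₅, hy₆⟩
end

section
/- If λ ∈ [0, 9] and (x_m) is the sequence defined by x_0 = λ and x_{m+1} = 3 − √(9 − x_m), then the sequence (6^m · x_m) converges to a finite limit. -/
/-!
Write `f t = 3 - √(9 - t)`. On `[0, 9]` one has `t / 6 ≤ f t ≤ t / 3`, so the orbit stays in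
`[0, 9]` and decays like `9 · 3⁻ᵐ`, and `0 ≤ 6 f t - t ≤ t² / 6`. Hence consecutive terms of
`6ᵐ xₘ` differ by at most `6ᵐ xₘ² / 6 = O((2/3)ᵐ)`, so the sequence is Cauchy.
-/

open Filter

theorem cauchySeq_pow_mul_of_abs_mul_sub_le {c C r : ℝ} {x : ℕ → ℝ} (hcr : |c| * r < 1)
    (h : ∀ m, |c * x (m + 1) - x m| ≤ C * r ^ m) :
    CauchySeq fun m => c ^ m * x m := by
  refine cauchySeq_of_le_geometric (|c| * r) C hcr fun m => ?_
  calc dist (c ^ m * x m) (c ^ (m + 1) * x (m + 1))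
      = |c| ^ m * |c * x (m + 1) - x m| := by
        rw [Real.dist_eq, abs_sub_comm, ← abs_pow, ← abs_mul]
        ring_nf
    _ ≤ |c| ^ m * (C * r ^ m) := by gcongr; exact h m
    _ = C * (|c| * r) ^ m := by ring

section DecimationMap

variable {t : ℝ}

theorem div_six_le_three_sub_sqrt (ht0 : 0 ≤ t) (ht9 : t ≤ 9) : t / 6 ≤ 3 - √(9 - t) := by
  have : √(9 - t) ≤ 3 - t / 6 :=
    Real.sqrt_le_iff.mpr ⟨by linarith, by nlinarith⟩
  linarith

theorem three_sub_sqrt_le_div_three (ht0 : 0 ≤ t) (ht9 : t ≤ 9) : 3 - √(9 - t) ≤ t / 3 := by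
  have : 3 - t / 3 ≤ √(9 - t) :=
    Real.le_sqrt_of_sq_le (by nlinarith [mul_nonneg ht0 (sub_nonneg.2 ht9)])
  linarith

theorem three_sub_sqrt_le_div_six_add_sq (ht9 : t ≤ 9) :
    3 - √(9 - t) ≤ t / 6 + t ^ 2 / 36 := by
  have : 3 - (t / 6 + t ^ 2 / 36) ≤ √(9 - t) := by
    rcases le_total (3 - (t / 6 + t ^ 2 / 36)) 0 with hneg | hpos
    · exact hneg.trans (Real.sqrt_nonneg _)
    · exact Real.le_sqrt_of_sq_le (by nlinarith [mul_nonneg hpos (sub_nonneg.2 ht9)])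
  linarith

end DecimationMap

section Orbit

variable {x : ℕ → ℝ} (hrec : ∀ m, x (m + 1) = 3 - √(9 - x m))
include hrec

theorem orbit_mem_Icc (h0 : x 0 ∈ Set.Icc (0 : ℝ) 9) (m : ℕ) : x m ∈ Set.Icc (0 : ℝ) 9 := by
  induction m with
  | zero => exact h0
  | succ m ih =>
    obtain ⟨hx0, hx9⟩ := ih
    rw [hrec m]
    constructor
    · linarith [div_six_le_three_sub_sqrt hx0 hx9]
    · linarith [three_sub_sqrt_le_div_three hx0 hx9]

theorem orbit_le_geometric (h0 : x 0 ∈ Set.Icc (0 : ℝ) 9) (m : ℕ) : x m ≤ 9 * (1 / 3) ^ m := by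
  induction m with
  | zero => simpa using h0.2
  | succ m ih =>
    obtain ⟨hx0, hx9⟩ := orbit_mem_Icc hrec h0 m
    rw [hrec m, pow_succ]
    linarith [three_sub_sqrt_le_div_three hx0 hx9]

theorem abs_six_mul_orbit_succ_sub_le (h0 : x 0 ∈ Set.Icc (0 : ℝ) 9) (m : ℕ) :
    |6 * x (m + 1) - x m| ≤ 27 / 2 * (1 / 9) ^ m := by
  obtain ⟨hx0, hx9⟩ := orbit_mem_Icc hrec h0 m
  have hlow := div_six_le_three_sub_sqrt hx0 hx9
  have hupp := three_sub_sqrt_le_div_six_add_sq hx9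
  have hsq : x m ^ 2 ≤ (9 * (1 / 3) ^ m) ^ 2 :=
    pow_le_pow_left₀ hx0 (orbit_le_geometric hrec h0 m) 2
  rw [hrec m, abs_of_nonneg (by linarith)]
  calc 6 * (3 - √(9 - x m)) - x m ≤ x m ^ 2 / 6 := by linarith
    _ ≤ (9 * (1 / 3) ^ m) ^ 2 / 6 := by gcongr
    _ = 27 / 2 * (1 / 9) ^ m := by
      rw [mul_pow, ← pow_mul, mul_comm m, pow_mul]
      norm_num
      ring

end Orbit

/-- If `λ ∈ [0, 9]` and `x₀ = λ`, `x_{m+1} = 3 - √(9 - x_m)`, then the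
sequence `6^m · x_m` converges to a finite limit. -/
theorem sierpinski_tetrahedron_decimation_limit_exists
    (lam : ℝ) (hlam : lam ∈ Set.Icc (0 : ℝ) 9)
    (x : ℕ → ℝ) (hx0 : x 0 = lam)
    (hrec : ∀ m : ℕ, x (m + 1) = 3 - Real.sqrt (9 - x m)) :
    ∃ L : ℝ, Tendsto (fun m : ℕ => (6 : ℝ) ^ m * x m) atTop (nhds L) := by
  subst hx0
  have hcauchy : CauchySeq fun m : ℕ => (6 : ℝ) ^ m * x m :=
    cauchySeq_pow_mul_of_abs_mul_sub_le (by norm_num [abs_of_pos])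
      (abs_six_mul_orbit_succ_sub_le hrec hlam)
  exact cauchySeq_tendsto_of_complete hcauchy
end
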